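/- arXiv:0911.0410 — 10 statements merged into one kernel-verified Lean document; each statement's English description precedes it below -/
import Mathlib

section
/- Under Assumptions A, for every h in the closed ball B(f, ρ) (where ρ = (1-q)R/m) the equation F(u) = h has a unique solution u in the closed ball B(y, R). -/
open Metric Set Filter

theorem stmt_0
    {H : Type*} [NormedAddCommGroup H] [InnerProductSpace ℝ H] [CompleteSpace H]
    (F : H → H) (F' : H → H →L[ℝ] H) (y f : H) (R m q : ℝ)
    (hf : F y = f) (hR : 0 < R)
    (hdiff : ∀ u ∈ closedBall y R, HasFDerivAt F (F' u) u)
    (Q : H →L[ℝ] H)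
    (hQl : Q.comp (F' y) = ContinuousLinearMap.id ℝ H)
    (hQr : (F' y).comp Q = ContinuousLinearMap.id ℝ H)
    (hm : 0 < m) (hQm : ‖Q‖ ≤ m)
    (ω : ℝ → ℝ)
    (hωcont : ContinuousOn ω (Icc 0 (2 * R)))
    (hωmono : StrictMonoOn ω (Icc 0 (2 * R)))
    (hω0 : ω 0 = 0)
    (hωF : ∀ u ∈ closedBall y R, ∀ v ∈ closedBall y R, ‖F' u - F' v‖ ≤ ω ‖u - v‖)
    (hq : m * ω R = q) (hq0 : 0 < q) (hq1 : q < 1)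
    (ρ : ℝ) (hρ : ρ = (1 - q) * R / m) :
    ∀ h ∈ closedBall f ρ, ∃! u, u ∈ closedBall y R ∧ F u = h := by
  intro h hh
  have hωR : 0 < ω R := by nlinarith
  set T : H → H := fun x => x - Q (F x - h) with hTdef
  have hid : ∀ z : H, Q (F' y z) = z := fun z => by
    have := congrArg (fun A : H →L[ℝ] H => A z) hQl
    simpa using this
  have hid2 : ∀ z : H, F' y (Q z) = z := fun z => by
    have := congrArg (fun A : H →L[ℝ] H => A z) hQr
    simpa using this
  -- mean value estimate
  have key : ∀ u ∈ closedBall y R, ∀ v ∈ closedBall y R,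
      ‖F u - F v - F' y (u - v)‖ ≤ ω R * ‖u - v‖ := by
    intro u hu v hv
    refine Convex.norm_image_sub_le_of_norm_hasFDerivWithin_le'
      (fun x hx => (hdiff x hx).hasFDerivWithinAt)
      (fun x hx => ?_) (convex_closedBall y R) hv hu
    have h1 : ‖F' x - F' y‖ ≤ ω ‖x - y‖ :=
      hωF x hx y (mem_closedBall_self hR.le)
    have h2 : ‖x - y‖ ≤ R := by
      rw [← dist_eq_norm]; exact mem_closedBall.mp hx
    have h3 : ω ‖x - y‖ ≤ ω R := by
      rcases eq_or_lt_of_le h2 with h | h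
      · rw [h]
      · exact le_of_lt (hωmono ⟨norm_nonneg _, by linarith⟩
          ⟨hR.le, by linarith⟩ h)
    linarith
  -- contraction estimate
  have hcontr : ∀ u ∈ closedBall y R, ∀ v ∈ closedBall y R,
      ‖T u - T v‖ ≤ q * ‖u - v‖ := by
    intro u hu v hv
    have heq : T u - T v = -Q (F u - F v - F' y (u - v)) := by
      simp only [hTdef, map_sub, hid]
      abel
    rw [heq, norm_neg]
    calc ‖Q (F u - F v - F' y (u - v))‖
        ≤ ‖Q‖ * ‖F u - F v - F' y (u - v)‖ := Q.le_opNorm _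
      _ ≤ m * (ω R * ‖u - v‖) := by
          apply mul_le_mul hQm (key u hu v hv) (norm_nonneg _) (le_trans (norm_nonneg _) hQm)
      _ = q * ‖u - v‖ := by rw [← hq]; ring
  -- T maps the ball into itself
  have hTy : ‖T y - y‖ ≤ (1 - q) * R := by
    have : T y - y = -Q (f - h) := by simp [hTdef, hf]
    rw [this, norm_neg]
    have hfh : ‖f - h‖ ≤ ρ := by
      rw [← dist_eq_norm, dist_comm]; exact mem_closedBall.mp hh
    calc ‖Q (f - h)‖ ≤ ‖Q‖ * ‖f - h‖ := Q.le_opNorm _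
      _ ≤ m * ρ := mul_le_mul hQm hfh (norm_nonneg _) (le_trans (norm_nonneg _) hQm)
      _ = (1 - q) * R := by rw [hρ]; field_simp
  have hmaps : ∀ u ∈ closedBall y R, T u ∈ closedBall y R := by
    intro u hu
    rw [mem_closedBall, dist_eq_norm]
    have h1 := hcontr u hu y (mem_closedBall_self hR.le)
    have h2 : ‖u - y‖ ≤ R := by rw [← dist_eq_norm]; exact mem_closedBall.mp hu
    calc ‖T u - y‖ ≤ ‖T u - T y‖ + ‖T y - y‖ := by
          have := norm_sub_le_norm_sub_add_norm_sub (T u) (T y) y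
          linarith [norm_add_le (T u - T y) (T y - y),
            (by abel : T u - T y + (T y - y) = T u - y)]
      _ ≤ q * ‖u - y‖ + (1 - q) * R := add_le_add h1 hTy
      _ ≤ q * R + (1 - q) * R := by nlinarith
      _ = R := by ring
  -- fixed points of T are solutions
  have hfix : ∀ u : H, T u = u ↔ F u = h := by
    intro u
    constructor
    · intro hTu
      have h0 : Q (F u - h) = 0 := by
        have : u - Q (F u - h) = u := hTu
        have := sub_eq_self.mp this
        exact this
      have := congrArg (F' y) h0
      rw [hid2] at this
      simpa [sub_eq_zero] using this
    · intro hFu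
      simp [hTdef, hFu]
  -- Banach fixed point on the closed ball
  haveI : CompleteSpace (closedBall y R) := Metric.isClosed_closedBall.completeSpace_coe
  haveI : Nonempty (closedBall y R) := ⟨⟨y, mem_closedBall_self hR.le⟩⟩
  set T' : closedBall y R → closedBall y R := fun x => ⟨T x, hmaps x x.2⟩ with hT'def
  have hcon : ContractingWith q.toNNReal T' := by
    constructor
    · rw [← NNReal.coe_lt_one, Real.coe_toNNReal q hq0.le]; exact hq1
    · apply LipschitzWith.of_dist_le_mul
      intro a b
      have := hcontr a a.2 b b.2
      simpa [hT'def, Subtype.dist_eq, dist_eq_norm, Real.coe_toNNReal q hq0.le] using this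
  set u := hcon.fixedPoint T' with hu
  have hufix : T' u = u := hcon.fixedPoint_isFixedPt
  refine ⟨(u : H), ⟨u.2, (hfix u).mp (congrArg Subtype.val hufix)⟩, ?_⟩
  rintro v ⟨hv, hFv⟩
  have : T' ⟨v, hv⟩ = ⟨v, hv⟩ := Subtype.ext ((hfix v).mpr hFv)
  have := hcon.fixedPoint_unique this
  exact congrArg Subtype.val this
end

section
/- Under Assumptions A, for every h in the closed ball B(f, ρ) (where ρ = (1−q)R/m), the map T(u) = u − Q(F(u) − h) maps the closed ball B(y, R) into itself: if ‖u − y‖ ≤ R then ‖T(u) − y‖ ≤ R. -/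
/-!
Write `L = F'(y)`. Since `Q ∘ L = I`, the displacement `T u - y` equals
`-Q (F u - F y - L (u - y)) - Q (f - h)`. By the mean value inequality the linearization
remainder is at most `ω(R) ‖u - y‖ ≤ ω(R) R`, so `‖T u - y‖ ≤ m (ω(R) R + ρ) = q R + (1 - q) R = R`.
-/

open Metric Set

theorem ContinuousLinearMap.norm_sub_apply_sub_le_of_comp_eq_id
    {𝕜 E G : Type*} [NontriviallyNormedField 𝕜]
    [NormedAddCommGroup E] [NormedSpace 𝕜 E] [NormedAddCommGroup G] [NormedSpace 𝕜 G]
    (Q : G →L[𝕜] E) (L : E →L[𝕜] G) (hQL : Q.comp L = ContinuousLinearMap.id 𝕜 E)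
    (g : E → G) (x u : E) (h : G) :
    ‖u - Q (g u - h) - x‖ ≤ ‖Q‖ * (‖g u - g x - L (u - x)‖ + ‖g x - h‖) := by
  have hQL_apply : Q (L (u - x)) = u - x := by
    simpa using congrArg (fun P : E →L[𝕜] E => P (u - x)) hQL
  have hsplit : u - Q (g u - h) - x = -Q (g u - g x - L (u - x) + (g x - h)) := by
    have hsum : g u - h = (g u - g x - L (u - x) + (g x - h)) + L (u - x) := by abel
    rw [hsum, map_add, hQL_apply]
    abel
  rw [hsplit, norm_neg]
  exact (Q.le_opNorm _).trans (by gcongr; exact norm_add_le _ _)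

theorem stmt_2_general
    {H : Type*} [NormedAddCommGroup H] [InnerProductSpace ℝ H]
    (F : H → H) (F' : H → H →L[ℝ] H) (y f : H) (R m q : ℝ)
    (hf : F y = f)
    (hdiff : ∀ u ∈ closedBall y R, HasFDerivAt F (F' u) u)
    (Q : H →L[ℝ] H)
    (hQl : Q.comp (F' y) = ContinuousLinearMap.id ℝ H)
    (hm : 0 < m) (hQm : ‖Q‖ ≤ m)
    (ω : ℝ → ℝ)
    (hωmono : StrictMonoOn ω (Icc 0 (2 * R)))
    (hωF : ∀ u ∈ closedBall y R, ∀ v ∈ closedBall y R, ‖F' u - F' v‖ ≤ ω ‖u - v‖)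
    (hq : m * ω R = q)
    (ρ : ℝ) (hρ : ρ = (1 - q) * R / m)
    (h : H) (hh : h ∈ closedBall f ρ) :
    ∀ u : H, ‖u - y‖ ≤ R → ‖(u - Q (F u - h)) - y‖ ≤ R := by
  intro u hu
  have hR : 0 ≤ R := (norm_nonneg _).trans hu
  have hyB : y ∈ closedBall y R := mem_closedBall_self hR
  have hderiv_bound : ∀ v ∈ closedBall y R, ‖F' v - F' y‖ ≤ ω R := by
    intro v hv
    have hvy : ‖v - y‖ ≤ R := mem_closedBall_iff_norm.1 hv
    exact (hωF v hv y hyB).trans <|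
      hωmono.monotoneOn ⟨norm_nonneg _, by linarith⟩ ⟨hR, by linarith⟩ hvy
  have hωR : 0 ≤ ω R := by simpa using hderiv_bound y hyB
  have hremainder : ‖F u - F y - F' y (u - y)‖ ≤ ω R * R :=
    ((convex_closedBall y R).norm_image_sub_le_of_norm_hasFDerivWithin_le'
      (fun v hv => (hdiff v hv).hasFDerivWithinAt) hderiv_bound hyB
      (mem_closedBall_iff_norm.2 hu)).trans (by gcongr)
  have hfh : ‖F y - h‖ ≤ ρ := by
    rw [hf, ← dist_eq_norm, dist_comm]
    exact hh
  calc ‖u - Q (F u - h) - y‖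
      ≤ ‖Q‖ * (‖F u - F y - F' y (u - y)‖ + ‖F y - h‖) :=
        Q.norm_sub_apply_sub_le_of_comp_eq_id (F' y) hQl F y u h
    _ ≤ m * (ω R * R + ρ) := by gcongr
    _ = R := by
        rw [hρ, mul_add, ← mul_assoc, hq]
        field_simp
        ring

theorem stmt_2
    {H : Type*} [NormedAddCommGroup H] [InnerProductSpace ℝ H] [CompleteSpace H]
    (F : H → H) (F' : H → H →L[ℝ] H) (y f : H) (R m q : ℝ)
    (hf : F y = f) (hR : 0 < R)
    (hdiff : ∀ u ∈ closedBall y R, HasFDerivAt F (F' u) u)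
    (Q : H →L[ℝ] H)
    (hQl : Q.comp (F' y) = ContinuousLinearMap.id ℝ H)
    (hQr : (F' y).comp Q = ContinuousLinearMap.id ℝ H)
    (hm : 0 < m) (hQm : ‖Q‖ ≤ m)
    (ω : ℝ → ℝ)
    (hωcont : ContinuousOn ω (Icc 0 (2 * R)))
    (hωmono : StrictMonoOn ω (Icc 0 (2 * R)))
    (hω0 : ω 0 = 0)
    (hωF : ∀ u ∈ closedBall y R, ∀ v ∈ closedBall y R, ‖F' u - F' v‖ ≤ ω ‖u - v‖)
    (hq : m * ω R = q) (hq0 : 0 < q) (hq1 : q < 1)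
    (ρ : ℝ) (hρ : ρ = (1 - q) * R / m)
    (h : H) (hh : h ∈ closedBall f ρ) :
    ∀ u : H, ‖u - y‖ ≤ R → ‖(u - Q (F u - h)) - y‖ ≤ R :=
  stmt_2_general F F' y f R m q hf hdiff Q hQl hm hQm ω hωmono hωF hq ρ hρ h hh
end

section
/- Under Assumptions A, for every h ∈ H the map T(u) = u − Q(F(u) − h) is a q-contraction on the closed ball B(y, R): for all u, v ∈ B(y, R), ‖T(u) − T(v)‖ ≤ q‖u − v‖. -/
open Metric Set Filter

/-! On the ball, `T u - T v = Q (F'(y) (u - v) - (F u - F v))` because `Q ∘ F'(y) = I`, and the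
mean value inequality bounds `F u - F v - F'(y) (u - v)` by `sup ‖F' x - F'(y)‖ · ‖u - v‖ ≤ ω(R) ‖u - v‖`.
Hence `‖T u - T v‖ ≤ ‖Q‖ ω(R) ‖u - v‖ ≤ m ω(R) ‖u - v‖ = q ‖u - v‖`. -/

section SimplifiedNewton

variable {E : Type*} [NormedAddCommGroup E] [NormedSpace ℝ E]

def simplifiedNewtonMap (Q : E →L[ℝ] E) (F : E → E) (h : E) (u : E) : E :=
  u - Q (F u - h)

theorem simplifiedNewtonMap_sub {Q A : E →L[ℝ] E} (hQA : Q.comp A = ContinuousLinearMap.id ℝ E)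
    (F : E → E) (h u v : E) :
    simplifiedNewtonMap Q F h u - simplifiedNewtonMap Q F h v = Q (A (u - v) - (F u - F v)) := by
  have hQA_apply : Q (A (u - v)) = u - v := by
    simpa using congrArg (fun L : E →L[ℝ] E => L (u - v)) hQA
  rw [map_sub Q (A (u - v)), hQA_apply, simplifiedNewtonMap, simplifiedNewtonMap]
  simp only [map_sub]
  abel

theorem norm_simplifiedNewtonMap_sub_le {Q A : E →L[ℝ] E}
    (hQA : Q.comp A = ContinuousLinearMap.id ℝ E) {F : E → E} {F' : E → E →L[ℝ] E} {s : Set E}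
    (hs : Convex ℝ s) (hF : ∀ x ∈ s, HasFDerivAt F (F' x) x) {C : ℝ}
    (hF'A : ∀ x ∈ s, ‖F' x - A‖ ≤ C) (h : E) {u v : E} (hu : u ∈ s) (hv : v ∈ s) :
    ‖simplifiedNewtonMap Q F h u - simplifiedNewtonMap Q F h v‖ ≤ ‖Q‖ * C * ‖u - v‖ := by
  have hmvt : ‖F u - F v - A (u - v)‖ ≤ C * ‖u - v‖ := by
    simpa using hs.norm_image_sub_le_of_norm_hasFDerivWithin_le'
      (fun x hx => (hF x hx).hasFDerivWithinAt) hF'A hv hu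
  rw [simplifiedNewtonMap_sub hQA, mul_assoc]
  calc ‖Q (A (u - v) - (F u - F v))‖ ≤ ‖Q‖ * ‖A (u - v) - (F u - F v)‖ := Q.le_opNorm _
    _ ≤ ‖Q‖ * (C * ‖u - v‖) := by
        gcongr
        rwa [norm_sub_rev]

end SimplifiedNewton

theorem norm_sub_le_of_modulus_of_mem_closedBall {E F : Type*} [PseudoMetricSpace E]
    [SeminormedAddCommGroup F] {G : E → F} {y x : E} {R : ℝ} {ω : ℝ → ℝ}
    (hω : MonotoneOn ω (Icc 0 (2 * R)))
    (hG : ∀ u ∈ closedBall y R, ∀ v ∈ closedBall y R, ‖G u - G v‖ ≤ ω (dist u v))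
    (hx : x ∈ closedBall y R) :
    ‖G x - G y‖ ≤ ω R := by
  have hR : 0 ≤ R := dist_nonneg.trans hx
  have hxR : dist x y ≤ R := hx
  exact (hG x hx y (mem_closedBall_self hR)).trans
    (hω ⟨dist_nonneg, by linarith⟩ ⟨hR, by linarith⟩ hxR)

theorem stmt_3_general
    {H : Type*} [NormedAddCommGroup H] [InnerProductSpace ℝ H]
    (F : H → H) (F' : H → H →L[ℝ] H) (y : H) (R m q : ℝ)
    (hdiff : ∀ u ∈ closedBall y R, HasFDerivAt F (F' u) u)
    (Q : H →L[ℝ] H)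
    (hQl : Q.comp (F' y) = ContinuousLinearMap.id ℝ H)
    (hQm : ‖Q‖ ≤ m)
    (ω : ℝ → ℝ)
    (hωmono : StrictMonoOn ω (Icc 0 (2 * R)))
    (hωF : ∀ u ∈ closedBall y R, ∀ v ∈ closedBall y R, ‖F' u - F' v‖ ≤ ω ‖u - v‖)
    (hq : m * ω R = q)
 :
    ∀ (h : H), ∀ u ∈ closedBall y R, ∀ v ∈ closedBall y R,
      ‖(u - Q (F u - h)) - (v - Q (F v - h))‖ ≤ q * ‖u - v‖ := by
  intro h u hu v hv
  have hF'y : ∀ x ∈ closedBall y R, ‖F' x - F' y‖ ≤ ω R := fun x hx =>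
    norm_sub_le_of_modulus_of_mem_closedBall hωmono.monotoneOn
      (by simpa only [dist_eq_norm] using hωF) hx
  have hωR : 0 ≤ ω R := (norm_nonneg _).trans (hF'y u hu)
  calc ‖(u - Q (F u - h)) - (v - Q (F v - h))‖ ≤ ‖Q‖ * ω R * ‖u - v‖ :=
        norm_simplifiedNewtonMap_sub_le hQl (convex_closedBall y R) hdiff hF'y h hu hv
    _ ≤ m * ω R * ‖u - v‖ := by gcongr
    _ = q * ‖u - v‖ := by rw [hq]

theorem stmt_3
    {H : Type*} [NormedAddCommGroup H] [InnerProductSpace ℝ H] [CompleteSpace H]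
    (F : H → H) (F' : H → H →L[ℝ] H) (y f : H) (R m q : ℝ)
    (hf : F y = f) (hR : 0 < R)
    (hdiff : ∀ u ∈ closedBall y R, HasFDerivAt F (F' u) u)
    (Q : H →L[ℝ] H)
    (hQl : Q.comp (F' y) = ContinuousLinearMap.id ℝ H)
    (hQr : (F' y).comp Q = ContinuousLinearMap.id ℝ H)
    (hm : 0 < m) (hQm : ‖Q‖ ≤ m)
    (ω : ℝ → ℝ)
    (hωcont : ContinuousOn ω (Icc 0 (2 * R)))
    (hωmono : StrictMonoOn ω (Icc 0 (2 * R)))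
    (hω0 : ω 0 = 0)
    (hωF : ∀ u ∈ closedBall y R, ∀ v ∈ closedBall y R, ‖F' u - F' v‖ ≤ ω ‖u - v‖)
    (hq : m * ω R = q) (hq0 : 0 < q) (hq1 : q < 1)
 :
    ∀ (h : H), ∀ u ∈ closedBall y R, ∀ v ∈ closedBall y R,
      ‖(u - Q (F u - h)) - (v - Q (F v - h))‖ ≤ q * ‖u - v‖ :=
  stmt_3_general F F' y R m q hdiff Q hQl hQm ω hωmono hωF hq
end

section
/- Under Assumptions A, suppose h : [0,T] → H is continuously differentiable with values in B(f, ρ), and u : [0,T] → H is a continuous function with u(t) ∈ B(y, R) and F(u(t)) = h(t) for all t ∈ [0,T]. Then u is continuously differentiable on [0,T] and its derivative satisfies F'(u(t))(u'(t)) = h'(t) for all t ∈ [0,T] (one-sided derivatives at the endpoints). -/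
/-! The inverse `Q` of `F'(y)` controls `F'(u) - F'(y)` on the ball, since `‖Q‖ ω(R) ≤ q < 1`; so
every `F'(u)` with `u ∈ B(y, R)` is invertible by a Neumann series. Differentiating `F ∘ u = h` then
forces `u' = F'(u)⁻¹ h'` (the easy half of the inverse function theorem), and this is continuous
because `F'` is uniformly continuous on the ball, with modulus `ω`, and inversion is continuous on
the units. -/

open Metric Set Filter Topology

theorem isUnit_of_norm_inv_mul_norm_sub_lt_one {R : Type*} [NormedRing R] [HasSummableGeomSeries R]
    (a : Rˣ) {b : R} (h : ‖(↑a⁻¹ : R)‖ * ‖b - a‖ < 1) : IsUnit b := by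
  have hsmall : ‖(↑a⁻¹ : R) * (a - b)‖ < 1 :=
    (norm_mul_le _ _).trans_lt (by rwa [norm_sub_rev])
  have hb : b = a * (1 - (↑a⁻¹ : R) * (a - b)) := by
    rw [mul_sub, mul_one, ← mul_assoc, Units.mul_inv, one_mul, sub_sub_cancel]
  rw [hb]
  exact a.isUnit.mul (Units.oneSub _ hsmall).isUnit

theorem uniformContinuousOn_of_norm_sub_le {E G : Type*} [SeminormedAddCommGroup E]
    [SeminormedAddCommGroup G] {f : E → G} {s : Set E} {ω : ℝ → ℝ} {I : Set ℝ}
    (hω : Tendsto ω (𝓝[I] 0) (𝓝 0)) (hI : ∀ x ∈ s, ∀ x' ∈ s, ‖x - x'‖ ∈ I)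
    (hf : ∀ x ∈ s, ∀ x' ∈ s, ‖f x - f x'‖ ≤ ω ‖x - x'‖) : UniformContinuousOn f s := by
  rw [Metric.uniformContinuousOn_iff]
  intro ε hε
  obtain ⟨δ, hδ, hωδ⟩ := Metric.tendsto_nhdsWithin_nhds.1 hω ε hε
  refine ⟨δ, hδ, fun x hx x' hx' hxx' => ?_⟩
  have hsmall := hωδ (hI x hx x' hx') (by simpa [dist_eq_norm] using hxx')
  rw [Real.dist_eq, sub_zero] at hsmall
  rw [dist_eq_norm]
  exact (hf x hx x' hx').trans_lt ((le_abs_self _).trans_lt hsmall)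

theorem ContinuousOn.ring_inverse {X R : Type*} [TopologicalSpace X] [NormedRing R]
    [HasSummableGeomSeries R] {A : X → R} {s : Set X} (hA : ContinuousOn A s)
    (hunit : ∀ x ∈ s, IsUnit (A x)) : ContinuousOn (fun x => Ring.inverse (A x)) s := fun x hx =>
  (hunit x hx).unit_spec ▸ NormedRing.inverse_continuousAt (hunit x hx).unit
    |>.comp_continuousWithinAt (hA x hx)

theorem norm_sub_mem_Icc_of_mem_closedBall {E : Type*} [SeminormedAddCommGroup E] {z x x' : E}
    {r : ℝ} (hx : x ∈ closedBall z r) (hx' : x' ∈ closedBall z r) : ‖x - x'‖ ∈ Icc 0 (2 * r) := by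
  refine ⟨norm_nonneg _, ?_⟩
  rw [← dist_eq_norm]
  linarith [dist_triangle_right x x' z, mem_closedBall.1 hx, mem_closedBall.1 hx']

theorem HasDerivWithinAt.of_comp_of_leftInverse {𝕜 E G : Type*} [NontriviallyNormedField 𝕜]
    [NormedAddCommGroup E] [NormedSpace 𝕜 E] [NormedAddCommGroup G] [NormedSpace 𝕜 G]
    {F : E → G} {A : E →L[𝕜] G} {B : G →L[𝕜] E} {u : 𝕜 → E} {h : 𝕜 → G} {h' : G} {s : Set 𝕜}
    {t : 𝕜} (hF : HasFDerivAt F A (u t)) (hu : ContinuousWithinAt u s t)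
    (hh : HasDerivWithinAt h h' s t) (hcomp : ∀ x ∈ s, F (u x) = h x)
    (hB : Function.LeftInverse B A) (ht : t ∈ s) : HasDerivWithinAt u (B h') s t := by
  have hst : Tendsto u (𝓝[s] t) (𝓝[univ] (u t)) := by rwa [nhdsWithin_univ]
  have := hF.hasFDerivWithinAt.of_comp_of_leftInverse hst hh.hasFDerivWithinAt
    (eventually_mem_nhdsWithin.mono hcomp) hB ht
  simpa using this.hasDerivWithinAt

theorem stmt_4_general
    {H : Type*} [NormedAddCommGroup H] [InnerProductSpace ℝ H] [CompleteSpace H]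
    (F : H → H) (F' : H → H →L[ℝ] H) (y : H) (R m q : ℝ)
    (hR : 0 < R)
    (hdiff : ∀ u ∈ closedBall y R, HasFDerivAt F (F' u) u)
    (Q : H →L[ℝ] H)
    (hQl : Q.comp (F' y) = ContinuousLinearMap.id ℝ H)
    (hQr : (F' y).comp Q = ContinuousLinearMap.id ℝ H)
    (hQm : ‖Q‖ ≤ m)
    (ω : ℝ → ℝ)
    (hωcont : ContinuousOn ω (Icc 0 (2 * R)))
    (hωmono : StrictMonoOn ω (Icc 0 (2 * R)))
    (hω0 : ω 0 = 0)
    (hωF : ∀ u ∈ closedBall y R, ∀ v ∈ closedBall y R, ‖F' u - F' v‖ ≤ ω ‖u - v‖)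
    (hq : m * ω R = q) (hq1 : q < 1)
    (T : ℝ) (h h' : ℝ → H)
    (hhderiv : ∀ t ∈ Icc (0:ℝ) T, HasDerivWithinAt h (h' t) (Icc 0 T) t)
    (hh'cont : ContinuousOn h' (Icc 0 T))
    (u : ℝ → H) (hucont : ContinuousOn u (Icc 0 T))
    (huball : ∀ t ∈ Icc (0:ℝ) T, u t ∈ closedBall y R)
    (huF : ∀ t ∈ Icc (0:ℝ) T, F (u t) = h t) :
    ∃ u' : ℝ → H, ContinuousOn u' (Icc 0 T) ∧
      ∀ t ∈ Icc (0:ℝ) T, HasDerivWithinAt u (u' t) (Icc 0 T) t ∧ F' (u t) (u' t) = h' t := by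
  have hy : y ∈ closedBall y R := mem_closedBall_self hR.le
  have hunit : ∀ x ∈ closedBall y R, IsUnit (F' x) := by
    intro x hx
    refine isUnit_of_norm_inv_mul_norm_sub_lt_one ⟨F' y, Q, hQr, hQl⟩ (lt_of_le_of_lt ?_ hq1)
    have hωR : ‖F' x - F' y‖ ≤ ω R := (hωF x hx y hy).trans <|
      hωmono.monotoneOn (norm_sub_mem_Icc_of_mem_closedBall hx hy) ⟨hR.le, by linarith⟩
        (mem_closedBall_iff_norm.1 hx)
    exact hq ▸ mul_le_mul hQm hωR (norm_nonneg _) ((norm_nonneg _).trans hQm)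
  have hF'cont : ContinuousOn F' (closedBall y R) :=
    (uniformContinuousOn_of_norm_sub_le
      (by simpa only [ContinuousWithinAt, hω0] using hωcont 0 ⟨le_rfl, by linarith⟩)
      (fun x hx x' hx' => norm_sub_mem_Icc_of_mem_closedBall hx hx') hωF).continuousOn
  have hF'u : ContinuousOn (fun t => F' (u t)) (Icc 0 T) := hF'cont.comp hucont huball
  refine ⟨fun t => Ring.inverse (F' (u t)) (h' t),
    (hF'u.ring_inverse fun t ht => hunit _ (huball t ht)).clm_apply hh'cont, fun t ht => ⟨?_, ?_⟩⟩
  · exact HasDerivWithinAt.of_comp_of_leftInverse (hdiff _ (huball t ht)) (hucont t ht)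
      (hhderiv t ht) huF (DFunLike.congr_fun (Ring.inverse_mul_cancel _ (hunit _ (huball t ht))))
      ht
  · exact DFunLike.congr_fun (Ring.mul_inverse_cancel _ (hunit _ (huball t ht))) (h' t)

theorem stmt_4
    {H : Type*} [NormedAddCommGroup H] [InnerProductSpace ℝ H] [CompleteSpace H]
    (F : H → H) (F' : H → H →L[ℝ] H) (y f : H) (R m q : ℝ)
    (hf : F y = f) (hR : 0 < R)
    (hdiff : ∀ u ∈ closedBall y R, HasFDerivAt F (F' u) u)
    (Q : H →L[ℝ] H)
    (hQl : Q.comp (F' y) = ContinuousLinearMap.id ℝ H)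
    (hQr : (F' y).comp Q = ContinuousLinearMap.id ℝ H)
    (hm : 0 < m) (hQm : ‖Q‖ ≤ m)
    (ω : ℝ → ℝ)
    (hωcont : ContinuousOn ω (Icc 0 (2 * R)))
    (hωmono : StrictMonoOn ω (Icc 0 (2 * R)))
    (hω0 : ω 0 = 0)
    (hωF : ∀ u ∈ closedBall y R, ∀ v ∈ closedBall y R, ‖F' u - F' v‖ ≤ ω ‖u - v‖)
    (hq : m * ω R = q) (hq0 : 0 < q) (hq1 : q < 1)
    (ρ : ℝ) (hρ : ρ = (1 - q) * R / m)
    (T : ℝ) (hT : 0 < T) (h h' : ℝ → H)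
    (hhderiv : ∀ t ∈ Icc (0:ℝ) T, HasDerivWithinAt h (h' t) (Icc 0 T) t)
    (hh'cont : ContinuousOn h' (Icc 0 T))
    (hhball : ∀ t ∈ Icc (0:ℝ) T, h t ∈ closedBall f ρ)
    (u : ℝ → H) (hucont : ContinuousOn u (Icc 0 T))
    (huball : ∀ t ∈ Icc (0:ℝ) T, u t ∈ closedBall y R)
    (huF : ∀ t ∈ Icc (0:ℝ) T, F (u t) = h t) :
    ∃ u' : ℝ → H, ContinuousOn u' (Icc 0 T) ∧
      ∀ t ∈ Icc (0:ℝ) T, HasDerivWithinAt u (u' t) (Icc 0 T) t ∧ F' (u t) (u' t) = h' t :=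
  stmt_4_general F F' y R m q hR hdiff Q hQl hQr hQm ω hωcont hωmono hω0 hωF hq hq1 T h h' hhderiv
    hh'cont u hucont huball huF
end

section
/- Under Assumptions B, let u : [0,∞) → H be the continuously differentiable function with u(t) ∈ B(y, R) and F(u(t)) = h + e^{−t}·v₀ for all t ≥ 0. Then the derivative satisfies the decay estimate ‖u'(t)‖ ≤ (m·r/(1−q))·e^{−t} for all t ≥ 0. -/
/-!
Differentiating `F (u t) = h + exp (-t) • v₀` gives `F'(u t) (u' t) = -exp (-t) • v₀`. Since
`u t` stays in `B(y, R)`, the operator `F'(u t)` is an `ω R`-perturbation of `F'(y)`, whose left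
inverse has norm at most `m`; as `m * ω R = q < 1`, this bounds `‖x‖` by `m / (1 - q)` times
`‖F'(u t) x‖`.
-/

open Metric Set Filter

theorem ContinuousLinearMap.norm_le_of_leftInverse_perturb {𝕜 E G : Type*}
    [NontriviallyNormedField 𝕜] [SeminormedAddCommGroup E] [SeminormedAddCommGroup G]
    [NormedSpace 𝕜 E] [NormedSpace 𝕜 G] {A B : E →L[𝕜] G} {Q : G →L[𝕜] E}
    (hQA : Q.comp A = ContinuousLinearMap.id 𝕜 E) {m q : ℝ} (hQ : ‖Q‖ ≤ m)
    (hBA : m * ‖B - A‖ ≤ q) (hq : q < 1) (x : E) :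
    ‖x‖ ≤ m * ‖B x‖ / (1 - q) := by
  have hx : x = Q (B x) - Q ((B - A) x) := by
    have hQAx : Q (A x) = x := congrArg (· x) hQA
    simp [hQAx]
  have hm : 0 ≤ m := (norm_nonneg Q).trans hQ
  have hbound : ‖x‖ ≤ m * ‖B x‖ + q * ‖x‖ :=
    calc ‖x‖ ≤ ‖Q (B x)‖ + ‖Q ((B - A) x)‖ := by
          conv_lhs => rw [hx]
          exact norm_sub_le _ _
      _ ≤ m * ‖B x‖ + m * (‖B - A‖ * ‖x‖) :=
          add_le_add (Q.le_of_opNorm_le hQ _)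
            ((Q.le_of_opNorm_le hQ _).trans (mul_le_mul_of_nonneg_left ((B - A).le_opNorm x) hm))
      _ ≤ m * ‖B x‖ + q * ‖x‖ := by
          rw [← mul_assoc]
          gcongr
  rw [le_div_iff₀ (sub_pos.2 hq)]
  linarith

theorem stmt_7_general
    {H : Type*} [NormedAddCommGroup H] [InnerProductSpace ℝ H]
    (F : H → H) (F' : H → H →L[ℝ] H) (y : H) (R m q : ℝ)
    (hR : 0 < R)
    (hdiff : ∀ u ∈ closedBall y R, HasFDerivAt F (F' u) u)
    (Q : H →L[ℝ] H)
    (hQl : Q.comp (F' y) = ContinuousLinearMap.id ℝ H)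
    (hQm : ‖Q‖ ≤ m)
    (ω : ℝ → ℝ)
    (hωmono : StrictMonoOn ω (Icc 0 (2 * R)))
    (hωF : ∀ u ∈ closedBall y R, ∀ v ∈ closedBall y R, ‖F' u - F' v‖ ≤ ω ‖u - v‖)
    (hq : m * ω R = q) (hq1 : q < 1)
    (h : H) (v₀ : H)
    (r : ℝ) (hr : r = ‖v₀‖)
    (u : ℝ → H)
    (hu : ∀ t : ℝ, 0 ≤ t → u t ∈ closedBall y R ∧ F (u t) = h + Real.exp (-t) • v₀)
    (u' : ℝ → H)
    (huderiv : ∀ t ∈ Ici (0:ℝ), HasDerivWithinAt u (u' t) (Ici 0) t) :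
    ∀ t : ℝ, 0 ≤ t → ‖u' t‖ ≤ m * r / (1 - q) * Real.exp (-t) := by
  intro t ht
  have hut : u t ∈ closedBall y R := (hu t ht).1
  have hFu' : F' (u t) (u' t) = -Real.exp (-t) • v₀ := by
    have hrhs : HasDerivAt (fun s => h + Real.exp (-s) • v₀) (-Real.exp (-t) • v₀) t := by
      simpa using (((hasDerivAt_neg t).exp).smul_const v₀).const_add h
    have hlhs : HasDerivWithinAt (fun s => h + Real.exp (-s) • v₀) (F' (u t) (u' t)) (Ici 0) t :=
      ((hdiff _ hut).comp_hasDerivWithinAt t (huderiv t ht)).congr_of_mem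
        (fun s hs => ((hu s hs).2).symm) ht
    exact (uniqueDiffOn_Ici 0 t ht).eq_deriv _ hlhs hrhs.hasDerivWithinAt
  have hdist : ‖u t - y‖ ≤ R := mem_closedBall_iff_norm.1 hut
  have hperturb : ‖F' (u t) - F' y‖ ≤ ω R :=
    (hωF _ hut y (mem_closedBall_self hR.le)).trans <|
      hωmono.monotoneOn ⟨norm_nonneg _, by linarith⟩ ⟨hR.le, by linarith⟩ hdist
  have hm : 0 ≤ m := (norm_nonneg Q).trans hQm
  calc ‖u' t‖ ≤ m * ‖F' (u t) (u' t)‖ / (1 - q) :=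
        ContinuousLinearMap.norm_le_of_leftInverse_perturb hQl hQm
          (hq ▸ mul_le_mul_of_nonneg_left hperturb hm) hq1 _
    _ = m * r / (1 - q) * Real.exp (-t) := by
        rw [hFu', norm_smul, norm_neg, Real.norm_of_nonneg (Real.exp_pos _).le, hr]
        ring

theorem stmt_7
    {H : Type*} [NormedAddCommGroup H] [InnerProductSpace ℝ H] [CompleteSpace H]
    (F : H → H) (F' : H → H →L[ℝ] H) (y f : H) (R m q : ℝ)
    (hf : F y = f) (hR : 0 < R)
    (hdiff : ∀ u ∈ closedBall y R, HasFDerivAt F (F' u) u)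
    (Q : H →L[ℝ] H)
    (hQl : Q.comp (F' y) = ContinuousLinearMap.id ℝ H)
    (hQr : (F' y).comp Q = ContinuousLinearMap.id ℝ H)
    (hm : 0 < m) (hQm : ‖Q‖ ≤ m)
    (ω : ℝ → ℝ)
    (hωcont : ContinuousOn ω (Icc 0 (2 * R)))
    (hωmono : StrictMonoOn ω (Icc 0 (2 * R)))
    (hω0 : ω 0 = 0)
    (hωF : ∀ u ∈ closedBall y R, ∀ v ∈ closedBall y R, ‖F' u - F' v‖ ≤ ω ‖u - v‖)
    (hq : m * ω R = q) (hq0 : 0 < q) (hq1 : q < 1)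
    (ρ : ℝ) (hρ : ρ = (1 - q) * R / m)
    (u₀ h : H) (v₀ : H) (hv₀ : v₀ = F u₀ - h)
    (r δ : ℝ) (hr : r = ‖v₀‖) (hδ : ‖h - f‖ ≤ δ) (hδr : δ + r ≤ ρ)
    (u : ℝ → H)
    (hu : ∀ t : ℝ, 0 ≤ t → u t ∈ closedBall y R ∧ F (u t) = h + Real.exp (-t) • v₀)
    (u' : ℝ → H)
    (huderiv : ∀ t ∈ Ici (0:ℝ), HasDerivWithinAt u (u' t) (Ici 0) t)
    (hu'cont : ContinuousOn u' (Ici 0)) :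
    ∀ t : ℝ, 0 ≤ t → ‖u' t‖ ≤ m * r / (1 - q) * Real.exp (-t) :=
  stmt_7_general F F' y R m q hR hdiff Q hQl hQm ω hωmono hωF hq hq1 h v₀ r hr u hu u' huderiv
end

section
/- Under Assumptions B, let u : [0,∞) → H be the continuously differentiable function with u(t) ∈ B(y, R) and F(u(t)) = h + e^{−t}·v₀ for all t ≥ 0. Then u(t) converges to a limit u(∞) ∈ H as t → ∞, and ‖u(∞) − u(t)‖ ≤ (m·r/(1−q))·e^{−t} for all t ≥ 0. -/
open Metric Set Filter

/-!
Differentiating `F (u t) = h + exp (-t) • v₀` gives `F' (u t) (u' t) = -exp (-t) • v₀`. On the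
ball, `F' (u t)` differs from `F' y` by at most `ω R = q / m` in norm, while `F' y` has a left
inverse of norm `≤ m`; hence `(1 - q) ‖u' t‖ ≤ m r exp (-t)`. By the mean value inequality
`‖u s - u t‖ ≤ m r / (1 - q) * exp (-t)` for `t ≤ s`, so `u` is Cauchy at infinity and the
bound passes to the limit.
-/

section

variable {E G : Type*} [NormedAddCommGroup E] [NormedSpace ℝ E]
  [NormedAddCommGroup G] [NormedSpace ℝ G]

theorem UniqueDiffWithinAt.fderiv_apply_eq_of_eqOn {f : E → G} {f' : E →L[ℝ] G} {γ : ℝ → E}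
    {g : ℝ → G} {γ' : E} {g' : G} {s : Set ℝ} {t : ℝ} (hs : UniqueDiffWithinAt ℝ s t)
    (hf : HasFDerivAt f f' (γ t)) (hγ : HasDerivWithinAt γ γ' s t)
    (hg : HasDerivWithinAt g g' s t) (hfγ : EqOn (f ∘ γ) g s) (ht : t ∈ s) : f' γ' = g' :=
  hs.eq_deriv s
    ((hf.comp_hasDerivWithinAt t hγ).congr (fun _ hx => (hfγ hx).symm) (hfγ ht).symm) hg

theorem ContinuousLinearMap.mul_norm_le_of_comp_eq_id {A B : E →L[ℝ] G} {Q : G →L[ℝ] E}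
    (hQA : Q.comp A = .id ℝ E) {m κ : ℝ} (hQm : ‖Q‖ ≤ m) (hBA : ‖B - A‖ ≤ κ) (w : E) :
    (1 - m * κ) * ‖w‖ ≤ m * ‖B w‖ := by
  have hm : 0 ≤ m := (norm_nonneg Q).trans hQm
  have hw : w = Q (B w) - Q ((B - A) w) := by
    have hQAw : Q (A w) = w := by simpa using congrArg (· w) hQA
    rw [sub_apply, map_sub, hQAw]
    abel
  have hQB : ‖Q (B w)‖ ≤ m * ‖B w‖ := (Q.le_opNorm _).trans (by gcongr)
  have hQBA : ‖Q ((B - A) w)‖ ≤ m * κ * ‖w‖ :=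
    calc ‖Q ((B - A) w)‖ ≤ ‖Q‖ * (‖B - A‖ * ‖w‖) := Q.le_opNorm_of_le ((B - A).le_opNorm w)
      _ ≤ m * κ * ‖w‖ := by rw [← mul_assoc]; gcongr
  have : ‖w‖ ≤ m * ‖B w‖ + m * κ * ‖w‖ :=
    calc ‖w‖ = ‖Q (B w) - Q ((B - A) w)‖ := congrArg norm hw
      _ ≤ ‖Q (B w)‖ + ‖Q ((B - A) w)‖ := norm_sub_le _ _
      _ ≤ m * ‖B w‖ + m * κ * ‖w‖ := add_le_add hQB hQBA
  linarith

theorem norm_sub_le_of_norm_deriv_le_mul_exp_neg {u u' : ℝ → E} {a C : ℝ}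
    (hu : ∀ x ∈ Ici a, HasDerivWithinAt u (u' x) (Ici a) x)
    (hu' : ∀ x ∈ Ici a, ‖u' x‖ ≤ C * Real.exp (-x)) {t s : ℝ} (ht : a ≤ t) (hts : t ≤ s) :
    ‖u s - u t‖ ≤ C * (Real.exp (-t) - Real.exp (-s)) := by
  have hIcc : Icc t s ⊆ Ici a := fun x hx => ht.trans hx.1
  have hB : ∀ x, HasDerivAt (fun τ => C * (Real.exp (-t) - Real.exp (-τ)))
      (C * Real.exp (-x)) x := fun x => by
    simpa using (((hasDerivAt_neg x).exp).const_sub (Real.exp (-t))).const_mul C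
  refine image_norm_le_of_norm_deriv_right_le_deriv_boundary (f := fun τ => u τ - u t)
    (fun x hx => ((hu x (hIcc hx)).continuousWithinAt.mono hIcc).sub continuousWithinAt_const)
    (fun x hx => ((hu x (hIcc (Ico_subset_Icc_self hx))).mono
      (Ici_subset_Ici.2 (ht.trans hx.1))).sub_const (u t))
    (by simp) hB (fun x hx => hu' x (ht.trans hx.1)) ⟨hts, le_rfl⟩

end

theorem exists_tendsto_of_dist_le {α : Type*} [PseudoMetricSpace α] [CompleteSpace α]
    {u : ℝ → α} {g : ℝ → ℝ} {a : ℝ} (hg : Tendsto g atTop (nhds 0))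
    (hu : ∀ t s, a ≤ t → t ≤ s → dist (u s) (u t) ≤ g t) :
    ∃ L, Tendsto u atTop (nhds L) ∧ ∀ t, a ≤ t → dist L (u t) ≤ g t := by
  have hcauchy : CauchySeq u := by
    refine Metric.cauchySeq_iff'.2 fun ε hε => ?_
    obtain ⟨N, hgN, haN⟩ :=
      ((hg.eventually (gt_mem_nhds hε)).and (eventually_ge_atTop a)).exists
    exact ⟨N, fun n hn => (hu N n haN hn).trans_lt hgN⟩
  obtain ⟨L, hL⟩ := cauchySeq_tendsto_of_complete hcauchy
  refine ⟨L, hL, fun t ht => ?_⟩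
  exact le_of_tendsto (hL.dist tendsto_const_nhds)
    ((eventually_ge_atTop t).mono fun s hs => hu t s ht hs)

theorem stmt_8_general
    {H : Type*} [NormedAddCommGroup H] [InnerProductSpace ℝ H] [CompleteSpace H]
    (F : H → H) (F' : H → H →L[ℝ] H) (y : H) (R m q : ℝ)
    (hR : 0 < R)
    (hdiff : ∀ u ∈ closedBall y R, HasFDerivAt F (F' u) u)
    (Q : H →L[ℝ] H)
    (hQl : Q.comp (F' y) = ContinuousLinearMap.id ℝ H)
    (hQm : ‖Q‖ ≤ m)
    (ω : ℝ → ℝ)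
    (hωmono : StrictMonoOn ω (Icc 0 (2 * R)))
    (hωF : ∀ u ∈ closedBall y R, ∀ v ∈ closedBall y R, ‖F' u - F' v‖ ≤ ω ‖u - v‖)
    (hq : m * ω R = q) (hq1 : q < 1)
    (h : H) (v₀ : H)
    (r : ℝ) (hr : r = ‖v₀‖)
    (u : ℝ → H)
    (hu : ∀ t : ℝ, 0 ≤ t → u t ∈ closedBall y R ∧ F (u t) = h + Real.exp (-t) • v₀)
    (u' : ℝ → H)
    (huderiv : ∀ t ∈ Ici (0:ℝ), HasDerivWithinAt u (u' t) (Ici 0) t) :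
    ∃ L : H, Tendsto u atTop (nhds L) ∧
      ∀ t : ℝ, 0 ≤ t → ‖L - u t‖ ≤ m * r / (1 - q) * Real.exp (-t) := by
  set C := m * r / (1 - q)
  have hC : 0 ≤ C := by
    have : 0 ≤ m := (norm_nonneg Q).trans hQm
    have : 0 ≤ r := hr ▸ norm_nonneg _
    have : 0 < 1 - q := by linarith
    positivity
  have hFu' : ∀ t ∈ Ici (0:ℝ), F' (u t) (u' t) = -Real.exp (-t) • v₀ := fun t ht =>
    (uniqueDiffOn_Ici 0 t ht).fderiv_apply_eq_of_eqOn (hdiff _ (hu t ht).1) (huderiv t ht)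
      (by simpa using ((hasDerivAt_neg t).exp.smul_const v₀).const_add h |>.hasDerivWithinAt)
      (fun s hs => (hu s hs).2) ht
  have hu' : ∀ t ∈ Ici (0:ℝ), ‖u' t‖ ≤ C * Real.exp (-t) := by
    intro t ht
    have hut := (hu t ht).1
    have hdist : ‖u t - y‖ ∈ Icc 0 (2 * R) :=
      ⟨norm_nonneg _, by rw [← dist_eq_norm]; linarith [mem_closedBall.1 hut]⟩
    have hFA : ‖F' (u t) - F' y‖ ≤ ω R :=
      (hωF _ hut y (mem_closedBall_self hR.le)).trans (hωmono.monotoneOn hdist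
        ⟨hR.le, by linarith⟩ (by rw [← dist_eq_norm]; exact mem_closedBall.1 hut))
    have key := ContinuousLinearMap.mul_norm_le_of_comp_eq_id hQl hQm hFA (u' t)
    rw [hq, hFu' t ht, norm_smul, norm_neg, Real.norm_of_nonneg (Real.exp_pos _).le, ← hr]
      at key
    rw [div_mul_eq_mul_div, le_div_iff₀ (by linarith)]
    linarith
  obtain ⟨L, hL, hLu⟩ := exists_tendsto_of_dist_le (u := u) (a := 0)
    (by simpa using Real.tendsto_exp_neg_atTop_nhds_zero.const_mul C) fun t s ht hts => by
      rw [dist_eq_norm]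
      have := norm_sub_le_of_norm_deriv_le_mul_exp_neg huderiv hu' ht hts
      nlinarith [Real.exp_pos (-s)]
  exact ⟨L, hL, fun t ht => dist_eq_norm L (u t) ▸ hLu t ht⟩

theorem stmt_8
    {H : Type*} [NormedAddCommGroup H] [InnerProductSpace ℝ H] [CompleteSpace H]
    (F : H → H) (F' : H → H →L[ℝ] H) (y f : H) (R m q : ℝ)
    (hf : F y = f) (hR : 0 < R)
    (hdiff : ∀ u ∈ closedBall y R, HasFDerivAt F (F' u) u)
    (Q : H →L[ℝ] H)
    (hQl : Q.comp (F' y) = ContinuousLinearMap.id ℝ H)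
    (hQr : (F' y).comp Q = ContinuousLinearMap.id ℝ H)
    (hm : 0 < m) (hQm : ‖Q‖ ≤ m)
    (ω : ℝ → ℝ)
    (hωcont : ContinuousOn ω (Icc 0 (2 * R)))
    (hωmono : StrictMonoOn ω (Icc 0 (2 * R)))
    (hω0 : ω 0 = 0)
    (hωF : ∀ u ∈ closedBall y R, ∀ v ∈ closedBall y R, ‖F' u - F' v‖ ≤ ω ‖u - v‖)
    (hq : m * ω R = q) (hq0 : 0 < q) (hq1 : q < 1)
    (ρ : ℝ) (hρ : ρ = (1 - q) * R / m)
    (u₀ h : H) (v₀ : H) (hv₀ : v₀ = F u₀ - h)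
    (r δ : ℝ) (hr : r = ‖v₀‖) (hδ : ‖h - f‖ ≤ δ) (hδr : δ + r ≤ ρ)
    (u : ℝ → H)
    (hu : ∀ t : ℝ, 0 ≤ t → u t ∈ closedBall y R ∧ F (u t) = h + Real.exp (-t) • v₀)
    (u' : ℝ → H)
    (huderiv : ∀ t ∈ Ici (0:ℝ), HasDerivWithinAt u (u' t) (Ici 0) t)
    (hu'cont : ContinuousOn u' (Ici 0)) :
    ∃ L : H, Tendsto u atTop (nhds L) ∧
      ∀ t : ℝ, 0 ≤ t → ‖L - u t‖ ≤ m * r / (1 - q) * Real.exp (-t) :=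
  stmt_8_general F F' y R m q hR hdiff Q hQl hQm ω hωmono hωF hq hq1 h v₀ r hr u hu u' huderiv
end

section
/- Assume Assumptions A hold with q ∈ (0, 1/2), set q₁ = q/(1−q), and let z ∈ H satisfy q₁·‖z − y‖ ≤ R and ‖z − y‖ ≤ R. Define the Newton iteration u₀ = z, u_{n+1} = u_n − [F'(u_n)]^{−1}(F(u_n) − f). Then all iterates u_n lie in B(y, R) and u_n converges to y, i.e., ‖u_n − y‖ → 0 as n → ∞. -/
open Metric Set Filter

theorem stmt_11
    {H : Type*} [NormedAddCommGroup H] [InnerProductSpace ℝ H] [CompleteSpace H]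
    (F : H → H) (F' : H → H →L[ℝ] H) (y f : H) (R m q : ℝ)
    (hf : F y = f) (hR : 0 < R)
    (hdiff : ∀ u ∈ closedBall y R, HasFDerivAt F (F' u) u)
    (Q : H →L[ℝ] H)
    (hQl : Q.comp (F' y) = ContinuousLinearMap.id ℝ H)
    (hQr : (F' y).comp Q = ContinuousLinearMap.id ℝ H)
    (hm : 0 < m) (hQm : ‖Q‖ ≤ m)
    (ω : ℝ → ℝ)
    (hωcont : ContinuousOn ω (Icc 0 (2 * R)))
    (hωmono : StrictMonoOn ω (Icc 0 (2 * R)))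
    (hω0 : ω 0 = 0)
    (hωF : ∀ u ∈ closedBall y R, ∀ v ∈ closedBall y R, ‖F' u - F' v‖ ≤ ω ‖u - v‖)
    (hq : m * ω R = q) (hq0 : 0 < q) (hq1 : q < 1)
    (hqhalf : q < 1/2) (q₁ : ℝ) (hq₁ : q₁ = q / (1 - q))
    (z : H) (hz1 : q₁ * ‖z - y‖ ≤ R) (hz2 : ‖z - y‖ ≤ R)
    (u : ℕ → H) (S : ℕ → H →L[ℝ] H) (hu0 : u 0 = z)
    (hSl : ∀ n, (S n).comp (F' (u n)) = ContinuousLinearMap.id ℝ H)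
    (hSr : ∀ n, (F' (u n)).comp (S n) = ContinuousLinearMap.id ℝ H)
    (hrec : ∀ n, u (n + 1) = u n - S n (F (u n) - f)) :
    (∀ n, u n ∈ closedBall y R) ∧
      Tendsto (fun n => ‖u n - y‖) atTop (nhds 0) := by
  have h1q : (0:ℝ) < 1 - q := by linarith
  have hq₁0 : 0 ≤ q₁ := by rw [hq₁]; positivity
  have hq₁1 : q₁ < 1 := by
    rw [hq₁, div_lt_one h1q]; linarith
  have hmono := hωmono.monotoneOn
  have hRmem : R ∈ Icc (0:ℝ) (2*R) := ⟨le_of_lt hR, by linarith⟩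
  have hωR0 : 0 ≤ ω R := by
    have := hmono (by constructor <;> linarith : (0:ℝ) ∈ Icc (0:ℝ) (2*R)) hRmem hR.le
    linarith [hω0 ▸ this]
  -- main step
  have step : ∀ n, ‖u n - y‖ ≤ R → ‖u (n+1) - y‖ ≤ q₁ * ‖u n - y‖ := by
    intro n hn
    set rn := ‖u n - y‖ with hrn
    have hrn0 : 0 ≤ rn := norm_nonneg _
    have hun : u n ∈ closedBall y R := by
      rw [mem_closedBall, dist_eq_norm]; exact hn
    have hrnmem : rn ∈ Icc (0:ℝ) (2*R) := ⟨hrn0, by linarith⟩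
    have hωrn : ω rn ≤ ω R := hmono hrnmem hRmem hn
    have hωrn0 : 0 ≤ ω rn := by
      have := hmono (by constructor <;> linarith : (0:ℝ) ∈ Icc (0:ℝ) (2*R)) hrnmem hrn0
      linarith [hω0 ▸ this]
    -- bound on ‖S n‖
    have hcomp : (S n).comp ((F' (u n) - F' y).comp Q) = Q - S n := by
      rw [ContinuousLinearMap.sub_comp, ContinuousLinearMap.comp_sub,
        ← ContinuousLinearMap.comp_assoc, hSl n, hQr, ContinuousLinearMap.id_comp,
        ContinuousLinearMap.comp_id]
    have hymem : y ∈ closedBall y R := mem_closedBall_self hR.le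
    have hFdiff : ‖F' (u n) - F' y‖ ≤ ω rn := hωF _ hun _ hymem
    have hSbound : ‖S n‖ ≤ m / (1 - q) := by
      have h1 : ‖S n‖ ≤ ‖Q‖ + ‖(S n).comp ((F' (u n) - F' y).comp Q)‖ := by
        have : S n = Q - ((S n).comp ((F' (u n) - F' y).comp Q)) := by
          rw [hcomp]; abel
        calc ‖S n‖ = ‖Q - ((S n).comp ((F' (u n) - F' y).comp Q))‖ := by rw [← this]
          _ ≤ _ := norm_sub_le _ _
      have h2 : ‖(S n).comp ((F' (u n) - F' y).comp Q)‖ ≤ ‖S n‖ * (ω rn * m) := by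
        calc ‖(S n).comp ((F' (u n) - F' y).comp Q)‖
            ≤ ‖S n‖ * ‖(F' (u n) - F' y).comp Q‖ := ContinuousLinearMap.opNorm_comp_le _ _
          _ ≤ ‖S n‖ * (‖F' (u n) - F' y‖ * ‖Q‖) := by
              gcongr; exact ContinuousLinearMap.opNorm_comp_le _ _
          _ ≤ ‖S n‖ * (ω rn * m) := by gcongr
      have h3 : ω rn * m ≤ q := by
        calc ω rn * m ≤ ω R * m := by gcongr
          _ = q := by linarith [hq]
      rw [le_div_iff₀ h1q]
      nlinarith [norm_nonneg (S n), norm_nonneg ((S n).comp ((F' (u n) - F' y).comp Q)), hQm]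
    -- mean value estimate on the segment
    set s := segment ℝ y (u n) with hs
    have hssub : s ⊆ closedBall y R :=
      (convex_closedBall y R).segment_subset hymem hun
    have hseg : ∀ x ∈ s, ‖x - u n‖ ≤ rn := by
      rintro x ⟨a, b, ha, hb, hab, rfl⟩
      have hx : a • y + b • u n - u n = a • (y - u n) := by
        have hb1 : b = 1 - a := by linarith
        subst hb1; module
      rw [hx, norm_smul, Real.norm_eq_abs, abs_of_nonneg ha]
      have : ‖y - u n‖ = rn := by rw [norm_sub_rev]
      rw [this]
      nlinarith
    have hmvt : ‖(F (u n) - f) - F' (u n) (u n - y)‖ ≤ ω rn * rn := by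
      have hder : ∀ x ∈ s, HasFDerivWithinAt (fun w => F w - F' (u n) w)
          (F' x - F' (u n)) s x := by
        intro x hx
        exact ((hdiff x (hssub hx)).sub ((F' (u n)).hasFDerivAt)).hasFDerivWithinAt
      have hbd : ∀ x ∈ s, ‖F' x - F' (u n)‖ ≤ ω rn := by
        intro x hx
        have h1 : ‖F' x - F' (u n)‖ ≤ ω ‖x - u n‖ := hωF _ (hssub hx) _ hun
        have h2 : ‖x - u n‖ ≤ rn := hseg x hx
        exact h1.trans (hmono ⟨norm_nonneg _, by linarith⟩ hrnmem h2)
      have := (convex_segment y (u n)).norm_image_sub_le_of_norm_hasFDerivWithin_le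
        hder hbd (left_mem_segment ℝ y (u n)) (right_mem_segment ℝ y (u n))
      have heq : (F (u n) - F' (u n) (u n)) - (F y - F' (u n) y)
          = (F (u n) - f) - F' (u n) (u n - y) := by
        rw [hf, map_sub]; abel
      rw [heq] at this
      exact this
    -- the recursion identity
    have hSid : S n (F' (u n) (u n - y)) = u n - y := by
      have := DFunLike.congr_fun (hSl n) (u n - y)
      simpa using this
    have hkey : u (n+1) - y = S n (F' (u n) (u n - y) - (F (u n) - f)) := by
      rw [map_sub, hSid, hrec n]; abel
    calc ‖u (n+1) - y‖ = ‖S n (F' (u n) (u n - y) - (F (u n) - f))‖ := by rw [hkey]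
      _ ≤ ‖S n‖ * ‖F' (u n) (u n - y) - (F (u n) - f)‖ := (S n).le_opNorm _
      _ = ‖S n‖ * ‖(F (u n) - f) - F' (u n) (u n - y)‖ := by rw [norm_sub_rev]
      _ ≤ (m / (1 - q)) * (ω rn * rn) := by
          apply mul_le_mul hSbound hmvt (norm_nonneg _)
          positivity
      _ ≤ (m / (1 - q)) * (ω R * rn) := by gcongr <;> positivity
      _ = (m * ω R) / (1 - q) * rn := by ring
      _ = q₁ * rn := by rw [hq, hq₁]
  -- induction: all iterates in ball and contraction
  have key : ∀ n, ‖u n - y‖ ≤ R ∧ ‖u (n+1) - y‖ ≤ q₁ * ‖u n - y‖ := by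
    intro n
    induction n with
    | zero =>
      have h0 : ‖u 0 - y‖ ≤ R := by rw [hu0]; exact hz2
      exact ⟨h0, step 0 h0⟩
    | succ k ih =>
      have hk : ‖u (k+1) - y‖ ≤ R := by
        have := ih.2
        nlinarith [ih.1, norm_nonneg (u k - y), norm_nonneg (u (k+1) - y)]
      exact ⟨hk, step (k+1) hk⟩
  constructor
  · intro n
    rw [mem_closedBall, dist_eq_norm]
    exact (key n).1
  · have hgeo : ∀ n, ‖u n - y‖ ≤ q₁ ^ n * ‖u 0 - y‖ := by
      intro n
      induction n with
      | zero => simp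
      | succ k ih =>
        calc ‖u (k+1) - y‖ ≤ q₁ * ‖u k - y‖ := (key k).2
          _ ≤ q₁ * (q₁ ^ k * ‖u 0 - y‖) := by gcongr
          _ = q₁ ^ (k+1) * ‖u 0 - y‖ := by ring
    have hlim : Tendsto (fun n => q₁ ^ n * ‖u 0 - y‖) atTop (nhds 0) := by
      have := (tendsto_pow_atTop_nhds_zero_of_lt_one hq₁0 hq₁1).mul_const ‖u 0 - y‖
      simpa using this
    exact squeeze_zero (fun n => norm_nonneg _) hgeo hlim
end

section
/- Assume Assumptions A hold with q ∈ (0, 1/2) and set q₁ = q/(1−q). If u ∈ B(y, R) and u⁺ = u − [F'(u)]^{−1}(F(u) − f) is one step of the Newton iteration, then ‖u⁺ − y‖ ≤ q₁·‖u − y‖. -/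
open Metric Set

/-! A Newton step from `u` lands at `u⁺ - y = S (F y - F u - F'(u) (y - u))`, where `S = F'(u)⁻¹`.
The mean value inequality bounds the Taylor remainder by `ω(R) ‖u - y‖`, since `F'` varies by at
most `ω(R)` along the segment `[y, u]`. Writing `S = Q + S (F'(y) - F'(u)) Q` gives
`‖S‖ ≤ m + q ‖S‖`, i.e. `‖S‖ ≤ m / (1 - q)`; together with `m ω(R) = q` this yields the factor
`q / (1 - q)`. -/

namespace ContinuousLinearMap

variable {𝕜 E G : Type*} [NontriviallyNormedField 𝕜] [NormedAddCommGroup E] [NormedSpace 𝕜 E]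
  [NormedAddCommGroup G] [NormedSpace 𝕜 G]

theorem eq_add_comp_sub_comp_of_comp_eq_id {A B : E →L[𝕜] G} {S Q : G →L[𝕜] E}
    (hS : S.comp A = ContinuousLinearMap.id 𝕜 E) (hQ : B.comp Q = ContinuousLinearMap.id 𝕜 G) :
    S = Q + (S.comp (B - A)).comp Q := by
  calc S = S.comp (B.comp Q) := by rw [hQ, comp_id]
    _ = Q + (S.comp (B - A)).comp Q := by
      rw [comp_sub, sub_comp, ← comp_assoc, hS, id_comp, add_sub_cancel]

theorem norm_le_of_comp_eq_id_of_norm_sub_le {A B : E →L[𝕜] G} {S Q : G →L[𝕜] E} {m δ : ℝ}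
    (hS : S.comp A = ContinuousLinearMap.id 𝕜 E) (hQ : B.comp Q = ContinuousLinearMap.id 𝕜 G)
    (hQm : ‖Q‖ ≤ m) (hBA : ‖B - A‖ ≤ δ) (hmδ : m * δ < 1) : ‖S‖ ≤ m / (1 - m * δ) := by
  have hδ : 0 ≤ δ := (norm_nonneg _).trans hBA
  have hS_le : ‖S‖ ≤ m + m * δ * ‖S‖ :=
    calc ‖S‖ = ‖Q + (S.comp (B - A)).comp Q‖ := by rw [← eq_add_comp_sub_comp_of_comp_eq_id hS hQ]
      _ ≤ ‖Q‖ + ‖S‖ * ‖B - A‖ * ‖Q‖ := by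
        grw [norm_add_le, opNorm_comp_le, opNorm_comp_le]
      _ ≤ m + ‖S‖ * δ * m := by gcongr
      _ = m + m * δ * ‖S‖ := by ring
  rw [le_div_iff₀ (by linarith)]
  linarith

theorem sub_sub_apply_sub_eq_of_comp_eq_id {A : E →L[𝕜] G} {S : G →L[𝕜] E}
    (hS : S.comp A = ContinuousLinearMap.id 𝕜 E) (g : E → G) (u y : E) :
    u - S (g u - g y) - y = S (g y - g u - A (y - u)) := by
  have hSA : ∀ v, S (A v) = v := fun v => DFunLike.congr_fun hS v
  simp only [map_sub, hSA]
  abel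

end ContinuousLinearMap

theorem norm_sub_le_of_mem_segment_of_modulus {E G : Type*} [NormedAddCommGroup E]
    [NormedSpace ℝ E] [NormedAddCommGroup G] {F' : E → G} {ω : ℝ → ℝ} {y u x : E} {R : ℝ}
    (hω : MonotoneOn ω (Icc 0 R))
    (hωF : ∀ u ∈ closedBall y R, ∀ v ∈ closedBall y R, ‖F' u - F' v‖ ≤ ω ‖u - v‖)
    (hu : u ∈ closedBall y R) (hx : x ∈ segment ℝ y u) : ‖F' x - F' u‖ ≤ ω R := by
  have hy : y ∈ closedBall y R := mem_closedBall_self (dist_nonneg.trans hu)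
  have hxu : ‖x - u‖ ≤ R := by
    rw [mem_closedBall, dist_eq_norm, ← norm_neg, neg_sub] at hu
    exact (norm_sub_le_of_mem_segment (segment_symm ℝ y u ▸ hx)).trans hu
  calc ‖F' x - F' u‖ ≤ ω ‖x - u‖ := hωF x ((convex_closedBall y R).segment_subset hy hu hx) u hu
    _ ≤ ω R := hω ⟨norm_nonneg _, hxu⟩ ⟨(norm_nonneg _).trans hxu, le_rfl⟩ hxu

theorem stmt_12_general
    {H : Type*} [NormedAddCommGroup H] [InnerProductSpace ℝ H]
    (F : H → H) (F' : H → H →L[ℝ] H) (y f : H) (R m q : ℝ)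
    (hf : F y = f)
    (hdiff : ∀ u ∈ closedBall y R, HasFDerivAt F (F' u) u)
    (Q : H →L[ℝ] H)
    (hQr : (F' y).comp Q = ContinuousLinearMap.id ℝ H)
    (hQm : ‖Q‖ ≤ m)
    (ω : ℝ → ℝ)
    (hωmono : StrictMonoOn ω (Icc 0 (2 * R)))
    (hωF : ∀ u ∈ closedBall y R, ∀ v ∈ closedBall y R, ‖F' u - F' v‖ ≤ ω ‖u - v‖)
    (hq : m * ω R = q) (hq1 : q < 1)
    (q₁ : ℝ) (hq₁ : q₁ = q / (1 - q))
    (u : H) (hu : u ∈ closedBall y R) (S : H →L[ℝ] H)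
    (hSl : S.comp (F' u) = ContinuousLinearMap.id ℝ H)
    (uplus : H) (huplus : uplus = u - S (F u - f)) :
    ‖uplus - y‖ ≤ q₁ * ‖u - y‖ := by
  have hy : y ∈ closedBall y R := mem_closedBall_self (dist_nonneg.trans hu)
  have hseg : segment ℝ y u ⊆ closedBall y R := (convex_closedBall y R).segment_subset hy hu
  have hF'_le : ∀ x ∈ segment ℝ y u, ‖F' x - F' u‖ ≤ ω R := fun x =>
    norm_sub_le_of_mem_segment_of_modulus
      (hωmono.monotoneOn.mono (Icc_subset_Icc_right (by linarith [dist_nonneg.trans hu]))) hωF hu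
  have hS : ‖S‖ ≤ m / (1 - q) := hq ▸ ContinuousLinearMap.norm_le_of_comp_eq_id_of_norm_sub_le
    hSl hQr hQm (hF'_le y (left_mem_segment ℝ y u)) (hq ▸ hq1)
  have hremainder : ‖F y - F u - F' u (y - u)‖ ≤ ω R * ‖u - y‖ := norm_sub_rev y u ▸
    (convex_segment y u).norm_image_sub_le_of_norm_hasFDerivWithin_le'
      (fun x hx => (hdiff x (hseg hx)).hasFDerivWithinAt) hF'_le
      (right_mem_segment ℝ y u) (left_mem_segment ℝ y u)
  have hm_div : 0 ≤ m / (1 - q) := div_nonneg ((norm_nonneg Q).trans hQm) (by linarith)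
  calc ‖uplus - y‖ = ‖S (F y - F u - F' u (y - u))‖ := by
        rw [huplus, ← hf, ContinuousLinearMap.sub_sub_apply_sub_eq_of_comp_eq_id hSl]
    _ ≤ ‖S‖ * ‖F y - F u - F' u (y - u)‖ := S.le_opNorm _
    _ ≤ m / (1 - q) * (ω R * ‖u - y‖) := mul_le_mul hS hremainder (norm_nonneg _) hm_div
    _ = q₁ * ‖u - y‖ := by rw [hq₁, ← hq]; field_simp

theorem stmt_12
    {H : Type*} [NormedAddCommGroup H] [InnerProductSpace ℝ H] [CompleteSpace H]
    (F : H → H) (F' : H → H →L[ℝ] H) (y f : H) (R m q : ℝ)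
    (hf : F y = f) (hR : 0 < R)
    (hdiff : ∀ u ∈ closedBall y R, HasFDerivAt F (F' u) u)
    (Q : H →L[ℝ] H)
    (hQl : Q.comp (F' y) = ContinuousLinearMap.id ℝ H)
    (hQr : (F' y).comp Q = ContinuousLinearMap.id ℝ H)
    (hm : 0 < m) (hQm : ‖Q‖ ≤ m)
    (ω : ℝ → ℝ)
    (hωcont : ContinuousOn ω (Icc 0 (2 * R)))
    (hωmono : StrictMonoOn ω (Icc 0 (2 * R)))
    (hω0 : ω 0 = 0)
    (hωF : ∀ u ∈ closedBall y R, ∀ v ∈ closedBall y R, ‖F' u - F' v‖ ≤ ω ‖u - v‖)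
    (hq : m * ω R = q) (hq0 : 0 < q) (hq1 : q < 1)
    (hqhalf : q < 1/2) (q₁ : ℝ) (hq₁ : q₁ = q / (1 - q))
    (u : H) (hu : u ∈ closedBall y R) (S : H →L[ℝ] H)
    (hSl : S.comp (F' u) = ContinuousLinearMap.id ℝ H)
    (hSr : (F' u).comp S = ContinuousLinearMap.id ℝ H)
    (uplus : H) (huplus : uplus = u - S (F u - f)) :
    ‖uplus - y‖ ≤ q₁ * ‖u - y‖ :=
  stmt_12_general F F' y f R m q hf hdiff Q hQr hQm ω hωmono hωF hq hq1 q₁ hq₁ u hu S hSl uplus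
    huplus
end

section
/- Assume Assumptions A hold with q ∈ (0, 1/2), set q₁ = q/(1−q), and let z ∈ H satisfy q₁·‖z − y‖ ≤ R and ‖z − y‖ ≤ R. Define the Newton iteration u₀ = z, u_{n+1} = u_n − [F'(u_n)]^{−1}(F(u_n) − f). Then for every n ≥ 1, ‖u_n − y‖ ≤ q₁^{n−1}·R. -/
/-! Since `‖Q‖ ≤ m` and `m ‖F'(u) - F'(y)‖ ≤ m ω(R) = q < 1` on the ball, the inverse of `F'(u)`
is a small perturbation of `Q` and has norm at most `m / (1 - q)`. The error of a Newton step from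
`u` is `F'(u)⁻¹` applied to the Taylor remainder `F(y) - F(u) - F'(u)(y - u)`, which the mean value
inequality bounds by `ω(‖u - y‖) ‖u - y‖ ≤ ω(R) ‖u - y‖`. So every step taken inside the ball
contracts the distance to `y` by `q₁ = q / (1 - q)`, and `q < 1/2` makes `q₁ < 1`, so the iterates
never leave the ball. -/

open Metric Set Filter

namespace ContinuousLinearMap

variable {𝕜 E : Type*} [NontriviallyNormedField 𝕜] [NormedAddCommGroup E] [NormedSpace 𝕜 E]

theorem opNorm_le_of_comp_eq_id_of_near {A B Q S : E →L[𝕜] E} {m q : ℝ}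
    (hQB : Q.comp B = ContinuousLinearMap.id 𝕜 E)
    (hAS : A.comp S = ContinuousLinearMap.id 𝕜 E) (hQm : ‖Q‖ ≤ m)
    (hAB : m * ‖A - B‖ ≤ q) (hq : q < 1) :
    ‖S‖ ≤ m / (1 - q) := by
  have hm : 0 ≤ m := (norm_nonneg Q).trans hQm
  have hq' : 0 < 1 - q := by linarith
  refine S.opNorm_le_bound (by positivity) fun x => ?_
  have hSx : S x = Q x - Q ((A - B) (S x)) := by
    have hA : A (S x) = x := congr($hAS x)
    have hB : Q (B (S x)) = S x := congr($hQB (S x))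
    rw [sub_apply, map_sub, hA, hB, sub_sub_cancel]
  have hQx : ‖Q x‖ ≤ m * ‖x‖ := (Q.le_opNorm x).trans (by gcongr)
  have hQABx : ‖Q ((A - B) (S x))‖ ≤ q * ‖S x‖ :=
    calc ‖Q ((A - B) (S x))‖ ≤ ‖Q‖ * (‖A - B‖ * ‖S x‖) := Q.le_opNorm_of_le ((A - B).le_opNorm _)
      _ ≤ m * (‖A - B‖ * ‖S x‖) := by gcongr
      _ ≤ q * ‖S x‖ := by rw [← mul_assoc]; gcongr
  have : ‖S x‖ ≤ ‖Q x‖ + ‖Q ((A - B) (S x))‖ := by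
    conv_lhs => rw [hSx]
    exact norm_sub_le _ _
  rw [div_mul_eq_mul_div, le_div_iff₀ hq']
  linarith

end ContinuousLinearMap

section Newton

variable {E : Type*} [NormedAddCommGroup E] [NormedSpace ℝ E]

theorem norm_newton_step_sub_le {F : E → E} {F' : E → E →L[ℝ] E} {x y : E}
    (hF : ∀ v ∈ segment ℝ x y, HasFDerivWithinAt F (F' v) (segment ℝ x y) v)
    {S : E →L[ℝ] E} (hS : S.comp (F' x) = ContinuousLinearMap.id ℝ E) {C : ℝ}
    (hC : ∀ v ∈ segment ℝ x y, ‖F' v - F' x‖ ≤ C) :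
    ‖x - S (F x - F y) - y‖ ≤ ‖S‖ * (C * ‖y - x‖) := by
  have hstep : x - S (F x - F y) - y = S (F y - F x - F' x (y - x)) := by
    have : S (F' x (y - x)) = y - x := congr($hS (y - x))
    rw [map_sub S _ (F' x (y - x)), this, ← neg_sub (F x) (F y), map_neg]
    abel
  rw [hstep]
  exact S.le_opNorm_of_le <|
    (convex_segment x y).norm_image_sub_le_of_norm_hasFDerivWithin_le' hF hC
      (left_mem_segment ℝ x y) (right_mem_segment ℝ x y)

theorem norm_newton_step_sub_le_of_modulus {F : E → E} {F' : E → E →L[ℝ] E} {y : E}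
    {R m q : ℝ} {ω : ℝ → ℝ} {Q : E →L[ℝ] E}
    (hdiff : ∀ u ∈ closedBall y R, HasFDerivAt F (F' u) u)
    (hQ : Q.comp (F' y) = ContinuousLinearMap.id ℝ E) (hQm : ‖Q‖ ≤ m)
    (hω : MonotoneOn ω (Icc 0 R))
    (hωF : ∀ u ∈ closedBall y R, ∀ v ∈ closedBall y R, ‖F' u - F' v‖ ≤ ω ‖u - v‖)
    (hq : m * ω R = q) (hq1 : q < 1) {x : E} (hx : x ∈ closedBall y R) {S : E →L[ℝ] E}
    (hSl : S.comp (F' x) = ContinuousLinearMap.id ℝ E)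
    (hSr : (F' x).comp S = ContinuousLinearMap.id ℝ E) :
    ‖x - S (F x - F y) - y‖ ≤ q / (1 - q) * ‖x - y‖ := by
  set r := ‖x - y‖
  have hrR : r ≤ R := mem_closedBall_iff_norm.mp hx
  have hr : r ∈ Icc 0 R := ⟨norm_nonneg _, hrR⟩
  have hR : R ∈ Icc 0 R := ⟨hr.1.trans hrR, le_rfl⟩
  have hy : y ∈ closedBall y R := mem_closedBall_self hR.1
  have hseg : segment ℝ x y ⊆ closedBall y R := (convex_closedBall y R).segment_subset hx hy
  have hm : 0 ≤ m := (norm_nonneg Q).trans hQm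
  have hSnorm : ‖S‖ ≤ m / (1 - q) := by
    refine ContinuousLinearMap.opNorm_le_of_comp_eq_id_of_near hQ hSr hQm ?_ hq1
    rw [← hq]
    exact mul_le_mul_of_nonneg_left ((hωF x hx y hy).trans (hω hr hR hrR)) hm
  have hC : ∀ v ∈ segment ℝ x y, ‖F' v - F' x‖ ≤ ω r := fun v hv => by
    have hvx : ‖v - x‖ ≤ r := by
      simpa only [norm_sub_rev y x] using norm_sub_le_of_mem_segment hv
    exact (hωF v (hseg hv) x hx).trans (hω ⟨norm_nonneg _, hvx.trans hrR⟩ hr hvx)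
  calc ‖x - S (F x - F y) - y‖ ≤ ‖S‖ * (ω r * r) := by
        simpa only [norm_sub_rev y x] using norm_newton_step_sub_le
          (fun v hv => (hdiff v (hseg hv)).hasFDerivWithinAt) hSl hC
    _ ≤ m / (1 - q) * (ω R * r) := by
        have : 0 ≤ ω r := (norm_nonneg _).trans (hωF x hx y hy)
        gcongr
        exact hω hr hR hrR
    _ = q / (1 - q) * r := by rw [← hq]; ring

end Newton

theorem succ_le_pow_mul_of_contraction {a : ℕ → ℝ} {c R : ℝ} (hc0 : 0 ≤ c) (hc1 : c ≤ 1)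
    (hR : 0 ≤ R) (h0 : a 0 ≤ R) (hc0R : c * a 0 ≤ R)
    (hstep : ∀ n, a n ≤ R → a (n + 1) ≤ c * a n) (n : ℕ) :
    a (n + 1) ≤ c ^ n * R := by
  induction n with
  | zero => simpa using (hstep 0 h0).trans hc0R
  | succ k ih =>
    have hk : a (k + 1) ≤ R := ih.trans (mul_le_of_le_one_left hR (pow_le_one₀ hc0 hc1))
    calc a (k + 1 + 1) ≤ c * a (k + 1) := hstep _ hk
      _ ≤ c * (c ^ k * R) := by gcongr
      _ = c ^ (k + 1) * R := by ring

theorem stmt_13_general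
    {H : Type*} [NormedAddCommGroup H] [InnerProductSpace ℝ H]
    (F : H → H) (F' : H → H →L[ℝ] H) (y f : H) (R m q : ℝ)
    (hf : F y = f)
    (hdiff : ∀ u ∈ closedBall y R, HasFDerivAt F (F' u) u)
    (Q : H →L[ℝ] H)
    (hQl : Q.comp (F' y) = ContinuousLinearMap.id ℝ H)
    (hQm : ‖Q‖ ≤ m)
    (ω : ℝ → ℝ)
    (hωmono : StrictMonoOn ω (Icc 0 (2 * R)))
    (hωF : ∀ u ∈ closedBall y R, ∀ v ∈ closedBall y R, ‖F' u - F' v‖ ≤ ω ‖u - v‖)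
    (hq : m * ω R = q) (hq0 : 0 < q)
    (hqhalf : q < 1/2) (q₁ : ℝ) (hq₁ : q₁ = q / (1 - q))
    (z : H) (hz1 : q₁ * ‖z - y‖ ≤ R) (hz2 : ‖z - y‖ ≤ R)
    (u : ℕ → H) (S : ℕ → H →L[ℝ] H) (hu0 : u 0 = z)
    (hSl : ∀ n, (S n).comp (F' (u n)) = ContinuousLinearMap.id ℝ H)
    (hSr : ∀ n, (F' (u n)).comp (S n) = ContinuousLinearMap.id ℝ H)
    (hrec : ∀ n, u (n + 1) = u n - S n (F (u n) - f)) :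
    ∀ n : ℕ, 1 ≤ n → ‖u n - y‖ ≤ q₁ ^ (n - 1) * R := by
  have hq'1 : q < 1 := by linarith
  have hq₁0 : 0 ≤ q₁ := by rw [hq₁]; exact div_nonneg hq0.le (by linarith)
  have hq₁1 : q₁ ≤ 1 := by rw [hq₁, div_le_one (by linarith)]; linarith
  have hR : 0 ≤ R := (norm_nonneg _).trans hz2
  have hω : MonotoneOn ω (Icc 0 R) := hωmono.monotoneOn.mono (Icc_subset_Icc_right (by linarith))
  have hstep (n : ℕ) (hn : ‖u n - y‖ ≤ R) : ‖u (n + 1) - y‖ ≤ q₁ * ‖u n - y‖ := by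
    rw [hrec, hq₁, ← hf]
    exact norm_newton_step_sub_le_of_modulus hdiff hQl hQm hω hωF hq hq'1
      (mem_closedBall_iff_norm.mpr hn) (hSl n) (hSr n)
  intro n hn
  obtain ⟨k, rfl⟩ := Nat.exists_eq_add_of_le' hn
  simpa using succ_le_pow_mul_of_contraction (a := fun n => ‖u n - y‖) hq₁0 hq₁1 hR
    (by rwa [hu0]) (by rwa [hu0]) hstep k

theorem stmt_13
    {H : Type*} [NormedAddCommGroup H] [InnerProductSpace ℝ H] [CompleteSpace H]
    (F : H → H) (F' : H → H →L[ℝ] H) (y f : H) (R m q : ℝ)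
    (hf : F y = f) (hR : 0 < R)
    (hdiff : ∀ u ∈ closedBall y R, HasFDerivAt F (F' u) u)
    (Q : H →L[ℝ] H)
    (hQl : Q.comp (F' y) = ContinuousLinearMap.id ℝ H)
    (hQr : (F' y).comp Q = ContinuousLinearMap.id ℝ H)
    (hm : 0 < m) (hQm : ‖Q‖ ≤ m)
    (ω : ℝ → ℝ)
    (hωcont : ContinuousOn ω (Icc 0 (2 * R)))
    (hωmono : StrictMonoOn ω (Icc 0 (2 * R)))
    (hω0 : ω 0 = 0)
    (hωF : ∀ u ∈ closedBall y R, ∀ v ∈ closedBall y R, ‖F' u - F' v‖ ≤ ω ‖u - v‖)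
    (hq : m * ω R = q) (hq0 : 0 < q) (hq1 : q < 1)
    (hqhalf : q < 1/2) (q₁ : ℝ) (hq₁ : q₁ = q / (1 - q))
    (z : H) (hz1 : q₁ * ‖z - y‖ ≤ R) (hz2 : ‖z - y‖ ≤ R)
    (u : ℕ → H) (S : ℕ → H →L[ℝ] H) (hu0 : u 0 = z)
    (hSl : ∀ n, (S n).comp (F' (u n)) = ContinuousLinearMap.id ℝ H)
    (hSr : ∀ n, (F' (u n)).comp (S n) = ContinuousLinearMap.id ℝ H)
    (hrec : ∀ n, u (n + 1) = u n - S n (F (u n) - f)) :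
    ∀ n : ℕ, 1 ≤ n → ‖u n - y‖ ≤ q₁ ^ (n - 1) * R :=
  stmt_13_general F F' y f R m q hf hdiff Q hQl hQm ω hωmono hωF hq hq0 hqhalf q₁ hq₁ z hz1 hz2 u S
    hu0 hSl hSr hrec
end

section
/- Under Assumptions A, suppose u, w ∈ B(y, R). Then the averaged operator A = ∫₀¹ F'(u + s(w − u)) ds is boundedly invertible, with inverse of norm at most m/(1−q); in particular F(w) − F(u) = A(w − u). -/
open Metric Set Filter

/-! The averaged derivative `A` is within `ω R` of `F' y`, because every point of the segment
lies within `R` of `y`. Since `‖Q‖ ω R ≤ q < 1`, the Neumann series inverts `Q A = 1 - Q (F' y - A)`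
with norm at most `1 / (1 - q)`, and `(Q A)⁻¹ Q` is a two-sided inverse of `A`. The identity
`F w - F u = A (w - u)` is the fundamental theorem of calculus along the segment. -/

section NeumannSeries

variable {R : Type*} [NormedRing R] [HasSummableGeomSeries R]

theorem norm_inv_oneSub_le {t : R} (ht : ‖t‖ < 1) (h1 : ‖(1 : R)‖ ≤ 1) :
    ‖((Units.oneSub t ht)⁻¹ : Rˣ).val‖ ≤ (1 - ‖t‖)⁻¹ :=
  (tsum_geometric_le_of_norm_lt_one t ht).trans (by linarith)

theorem exists_inv_of_norm_sub_le {a b b' : R} {m δ : ℝ} (hb'b : b' * b = 1) (hbb' : b * b' = 1)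
    (hb' : ‖b'‖ ≤ m) (hab : ‖a - b‖ ≤ δ) (hmδ : m * δ < 1) (h1 : ‖(1 : R)‖ ≤ 1) :
    ∃ c : R, c * a = 1 ∧ a * c = 1 ∧ ‖c‖ ≤ m / (1 - m * δ) := by
  set t := b' * (b - a)
  have htδ : ‖t‖ ≤ m * δ := by
    calc ‖t‖ ≤ ‖b'‖ * ‖b - a‖ := norm_mul_le _ _
      _ ≤ m * δ := by
        rw [norm_sub_rev]
        exact mul_le_mul hb' hab (norm_nonneg _) ((norm_nonneg _).trans hb')
  have ht : ‖t‖ < 1 := htδ.trans_lt hmδ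
  set U := Units.oneSub t ht
  have hU : U.val = b' * a := by
    simp only [U, Units.val_oneSub, t, mul_sub, hb'b, sub_sub_cancel]
  have ha : a = b * U.val := by rw [hU, ← mul_assoc, hbb', one_mul]
  refine ⟨U⁻¹.val * b', ?_, ?_, ?_⟩
  · rw [mul_assoc, ← hU, Units.inv_mul]
  · rw [ha, mul_assoc, ← mul_assoc U.val, Units.mul_inv, one_mul, hbb']
  · calc ‖U⁻¹.val * b'‖ ≤ ‖U⁻¹.val‖ * ‖b'‖ := norm_mul_le _ _
      _ ≤ (1 - m * δ)⁻¹ * m := by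
        have hinv : ‖U⁻¹.val‖ ≤ (1 - m * δ)⁻¹ :=
          (norm_inv_oneSub_le ht h1).trans (by gcongr)
        exact mul_le_mul hinv hb' (norm_nonneg _) (inv_nonneg.mpr (by linarith))
      _ = m / (1 - m * δ) := by ring

end NeumannSeries

theorem norm_intervalIntegral_sub_le {E : Type*} [NormedAddCommGroup E] [NormedSpace ℝ E]
    [CompleteSpace E] {f : ℝ → E} {c : E} {C : ℝ} (hf : IntervalIntegrable f MeasureTheory.volume 0 1)
    (h : ∀ t ∈ Icc (0 : ℝ) 1, ‖f t - c‖ ≤ C) :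
    ‖(∫ t in (0 : ℝ)..1, f t) - c‖ ≤ C := by
  have hsub : (∫ t in (0 : ℝ)..1, f t) - c = ∫ t in (0 : ℝ)..1, (f t - c) := by
    rw [intervalIntegral.integral_sub hf intervalIntegrable_const,
      intervalIntegral.integral_const, sub_zero, one_smul]
  rw [hsub]
  refine (intervalIntegral.norm_integral_le_of_norm_le_const fun t ht =>
    h t (Ioc_subset_Icc_self (by rwa [uIoc_of_le zero_le_one] at ht))).trans_eq ?_
  norm_num

section Segment

variable {E : Type*} [NormedAddCommGroup E] [NormedSpace ℝ E] {s : Set E} {u w : E}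

theorem Convex.continuousOn_comp_add_smul_sub {X : Type*} [TopologicalSpace X] {f : E → X}
    (hs : Convex ℝ s) (hf : ContinuousOn f s) (hu : u ∈ s) (hw : w ∈ s) :
    ContinuousOn (fun t : ℝ => f (u + t • (w - u))) (Icc 0 1) :=
  hf.comp (by fun_prop) fun _ ht => hs.add_smul_sub_mem hu hw ht

theorem Convex.sub_eq_integral_fderiv_apply {G : Type*} [NormedAddCommGroup G]
    [NormedSpace ℝ G] [CompleteSpace G] {F : E → G} {F' : E → E →L[ℝ] G} (hs : Convex ℝ s)
    (hF : ∀ x ∈ s, HasFDerivAt F (F' x) x) (hF' : ContinuousOn F' s) (hu : u ∈ s) (hw : w ∈ s) :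
    F w - F u = (∫ t in (0 : ℝ)..1, F' (u + t • (w - u))) (w - u) := by
  have hderiv : ∀ t ∈ uIcc (0 : ℝ) 1,
      HasDerivAt (fun t : ℝ => F (u + t • (w - u))) (F' (u + t • (w - u)) (w - u)) t := by
    intro t ht
    rw [uIcc_of_le zero_le_one] at ht
    have hline : HasDerivAt (fun t : ℝ => u + t • (w - u)) (w - u) t := by
      simpa using ((hasDerivAt_id t).smul_const (w - u)).const_add u
    exact (hF _ (hs.add_smul_sub_mem hu hw ht)).comp_hasDerivAt t hline
  rw [ContinuousLinearMap.intervalIntegral_apply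
      ((hs.continuousOn_comp_add_smul_sub hF' hu hw).intervalIntegrable_of_Icc zero_le_one),
    intervalIntegral.integral_eq_sub_of_hasDerivAt hderiv
      ((hs.continuousOn_comp_add_smul_sub (hF'.clm_apply continuousOn_const) hu hw
        ).intervalIntegrable_of_Icc zero_le_one)]
  simp

end Segment

theorem stmt_15_general
    {H : Type*} [NormedAddCommGroup H] [InnerProductSpace ℝ H] [CompleteSpace H]
    (F : H → H) (F' : H → H →L[ℝ] H) (y : H) (R m q : ℝ)
    (hdiff : ∀ u ∈ closedBall y R, HasFDerivAt F (F' u) u)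
    (Q : H →L[ℝ] H)
    (hQl : Q.comp (F' y) = ContinuousLinearMap.id ℝ H)
    (hQr : (F' y).comp Q = ContinuousLinearMap.id ℝ H)
    (hQm : ‖Q‖ ≤ m)
    (ω : ℝ → ℝ)
    (hωmono : StrictMonoOn ω (Icc 0 (2 * R)))
    (hωF : ∀ u ∈ closedBall y R, ∀ v ∈ closedBall y R, ‖F' u - F' v‖ ≤ ω ‖u - v‖)
    (hq : m * ω R = q) (hq1 : q < 1)
    (hF'cont : ContinuousOn F' (closedBall y R))
    (u w : H) (hu : u ∈ closedBall y R) (hw : w ∈ closedBall y R)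
    (A : H →L[ℝ] H) (hA : A = ∫ s in (0:ℝ)..1, F' (u + s • (w - u))) :
    ∃ B : H →L[ℝ] H, B.comp A = ContinuousLinearMap.id ℝ H ∧
      A.comp B = ContinuousLinearMap.id ℝ H ∧ ‖B‖ ≤ m / (1 - q) ∧
      F w - F u = A (w - u) := by
  have hR : 0 ≤ R := dist_nonneg.trans hu
  have hball := convex_closedBall y R
  have hωR : ∀ v ∈ closedBall y R, ω ‖v - y‖ ≤ ω R := fun v hv =>
    hωmono.monotoneOn ⟨norm_nonneg _, by linarith [mem_closedBall_iff_norm.mp hv]⟩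
      ⟨hR, by linarith⟩ (mem_closedBall_iff_norm.mp hv)
  have hdist : ‖A - F' y‖ ≤ ω R := by
    rw [hA]
    refine norm_intervalIntegral_sub_le
      ((hball.continuousOn_comp_add_smul_sub hF'cont hu hw).intervalIntegrable_of_Icc zero_le_one)
      fun t ht => ?_
    have hv := hball.add_smul_sub_mem hu hw ht
    exact (hωF _ hv y (mem_closedBall_self hR)).trans (hωR _ hv)
  obtain ⟨B, hBA, hAB, hB⟩ := exists_inv_of_norm_sub_le hQl hQr hQm hdist (hq ▸ hq1)
    ContinuousLinearMap.norm_id_le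
  exact ⟨B, hBA, hAB, hq ▸ hB, hA ▸ hball.sub_eq_integral_fderiv_apply hdiff hF'cont hu hw⟩

theorem stmt_15
    {H : Type*} [NormedAddCommGroup H] [InnerProductSpace ℝ H] [CompleteSpace H]
    (F : H → H) (F' : H → H →L[ℝ] H) (y f : H) (R m q : ℝ)
    (hf : F y = f) (hR : 0 < R)
    (hdiff : ∀ u ∈ closedBall y R, HasFDerivAt F (F' u) u)
    (Q : H →L[ℝ] H)
    (hQl : Q.comp (F' y) = ContinuousLinearMap.id ℝ H)
    (hQr : (F' y).comp Q = ContinuousLinearMap.id ℝ H)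
    (hm : 0 < m) (hQm : ‖Q‖ ≤ m)
    (ω : ℝ → ℝ)
    (hωcont : ContinuousOn ω (Icc 0 (2 * R)))
    (hωmono : StrictMonoOn ω (Icc 0 (2 * R)))
    (hω0 : ω 0 = 0)
    (hωF : ∀ u ∈ closedBall y R, ∀ v ∈ closedBall y R, ‖F' u - F' v‖ ≤ ω ‖u - v‖)
    (hq : m * ω R = q) (hq0 : 0 < q) (hq1 : q < 1)
    (hF'cont : ContinuousOn F' (closedBall y R))
    (u w : H) (hu : u ∈ closedBall y R) (hw : w ∈ closedBall y R)
    (A : H →L[ℝ] H) (hA : A = ∫ s in (0:ℝ)..1, F' (u + s • (w - u))) :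
    ∃ B : H →L[ℝ] H, B.comp A = ContinuousLinearMap.id ℝ H ∧
      A.comp B = ContinuousLinearMap.id ℝ H ∧ ‖B‖ ≤ m / (1 - q) ∧
      F w - F u = A (w - u) :=
  stmt_15_general F F' y R m q hdiff Q hQl hQr hQm ω hωmono hωF hq hq1 hF'cont u w hu hw A hA
end
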